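/- For every positive integer N there exists a finite simple connected graph G such that the Graver basis of the toric ideal I_G contains a binomial whose degree exceeds the degree of every circuit of I_G by at least N. -/

import Mathlib

open MvPolynomial

noncomputable section

/-! ### Term orders, initial terms, (reduced) Gröbner bases, universal Gröbner basis -/

/-- A term order on the monomials (exponent vectors) in variables indexed by `σ`:
a linear order for which `0` is least and which is compatible with addition. -/
structure TermOrder (σ : Type*) where
  lo : LinearOrder (σ →₀ ℕ)
  zero_min : ∀ u : σ →₀ ℕ, lo.le 0 u
  add_right : ∀ u v w : σ →₀ ℕ, lo.le u v → lo.le (u + w) (v + w)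

variable {σ : Type*} {K : Type*} [Field K]

/-- The leading (largest) exponent of a polynomial with respect to a term order
(junk value `0` if `f = 0`). -/
def TermOrder.leadExp (t : TermOrder σ) (f : MvPolynomial σ K) : σ →₀ ℕ :=
  haveI := Classical.propDecidable (f = 0)
  if h : f = 0 then 0
  else @Finset.max' _ t.lo f.support
    (Finset.nonempty_iff_ne_empty.mpr fun he => h (MvPolynomial.support_eq_empty.mp he))

/-- The initial term of a polynomial with respect to a term order. -/
def TermOrder.initial (t : TermOrder σ) (f : MvPolynomial σ K) : MvPolynomial σ K :=
  monomial (t.leadExp f) (f.coeff (t.leadExp f))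

/-- `𝒢` is a Gröbner basis of `I` w.r.t. the term order `t`. -/
def IsGroebnerBasis (t : TermOrder σ) (I : Ideal (MvPolynomial σ K))
    (𝒢 : Finset (MvPolynomial σ K)) : Prop :=
  (𝒢 : Set (MvPolynomial σ K)) ⊆ (I : Set (MvPolynomial σ K)) ∧
    Ideal.span (t.initial '' (𝒢 : Set (MvPolynomial σ K))) =
      Ideal.span (t.initial '' (I : Set (MvPolynomial σ K)))

/-- `𝒢` is a reduced Gröbner basis of `I` w.r.t. `t`: a Gröbner basis, all of whose elements
are monic, and no monomial occurring in an element of `𝒢` is divisible by the initial term of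
a different element of `𝒢`. -/
def IsReducedGroebnerBasis (t : TermOrder σ) (I : Ideal (MvPolynomial σ K))
    (𝒢 : Finset (MvPolynomial σ K)) : Prop :=
  IsGroebnerBasis t I 𝒢 ∧
    (∀ g ∈ 𝒢, g.coeff (t.leadExp g) = 1) ∧
    (∀ g ∈ 𝒢, ∀ g' ∈ 𝒢, g' ≠ g → ∀ u ∈ g.support, ¬ t.leadExp g' ≤ u)

/-- The universal Gröbner basis of `I`: the union of all reduced Gröbner bases of `I`
over all term orders. -/
def UniversalGB (I : Ideal (MvPolynomial σ K)) : Set (MvPolynomial σ K) :=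
  {f | ∃ (t : TermOrder σ) (𝒢 : Finset (MvPolynomial σ K)),
    IsReducedGroebnerBasis t I 𝒢 ∧ f ∈ 𝒢}

/-! ### Binomials, primitive binomials (Graver basis), circuits -/

/-- The binomial `x^u - x^v`. -/
def binom (K : Type*) [Field K] {σ : Type*} (u v : σ →₀ ℕ) : MvPolynomial σ K :=
  monomial u 1 - monomial v 1

/-- `f` is a primitive binomial of `I`: `f = x^u - x^v ∈ I` and there is no other binomial
`x^w - x^z ∈ I` with `x^w ∣ x^u` and `x^z ∣ x^v`.  The set of primitive binomials of `I`
is the Graver basis of `I`. -/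
def IsPrimitiveBinomial (I : Ideal (MvPolynomial σ K)) (f : MvPolynomial σ K) : Prop :=
  ∃ u v : σ →₀ ℕ, u ≠ v ∧ f = binom K u v ∧ f ∈ I ∧
    ∀ w z : σ →₀ ℕ, w ≠ z → binom K w z ∈ I → w ≤ u → z ≤ v → w = u ∧ z = v

/-- `f` is a circuit of `I`: an irreducible binomial of `I` whose support (set of variables
occurring in it) is minimal among the supports of nonzero binomials of `I`. -/
def IsCircuitBinomial (I : Ideal (MvPolynomial σ K)) (f : MvPolynomial σ K) : Prop :=
  (∃ u v : σ →₀ ℕ, u ≠ v ∧ f = binom K u v) ∧ f ∈ I ∧ Irreducible f ∧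
    ∀ g : MvPolynomial σ K, (∃ u v : σ →₀ ℕ, u ≠ v ∧ g = binom K u v) → g ∈ I →
      g.vars ⊆ f.vars → g.vars = f.vars

/-- The toric ideal of a vector configuration `A = (a_1, …, a_m) ⊆ ℕ^n`: the ideal generated
by all binomials `x^u - x^v` with `Σ uᵢ aᵢ = Σ vᵢ aᵢ`. -/
def toricIdealOfConfig (K : Type*) [Field K] {m n : ℕ} (A : Fin m → Fin n → ℕ) :
    Ideal (MvPolynomial (Fin m) K) :=
  Ideal.span {f | ∃ u v : Fin m →₀ ℕ,
    f = binom K u v ∧ (∑ i, u i • A i) = ∑ i, v i • A i}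

/-! ### Toric ideals of graphs -/

variable {V : Type*}

/-- The image `x_u * x_v` of an edge `e = {u, v}`. -/
def edgeImage (K : Type*) [Field K] {V : Type*} (e : Sym2 V) : MvPolynomial V K :=
  Sym2.lift ⟨fun a b => X a * X b, fun a b => mul_comm _ _⟩ e

/-- The toric ideal `I_G` of a graph `G`: the kernel of the `K`-algebra map
`K[e : e ∈ E(G)] → K[x_v : v ∈ V(G)]`, `e = {u,v} ↦ x_u x_v`. -/
def graphToricIdeal (K : Type*) [Field K] (G : SimpleGraph V) :
    Ideal (MvPolynomial G.edgeSet K) :=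
  RingHom.ker (MvPolynomial.aeval
    (fun e : G.edgeSet => edgeImage K (e : Sym2 V)) :
      MvPolynomial G.edgeSet K →ₐ[K] MvPolynomial V K).toRingHom

/-- An even closed walk `(v_0, v_1, …, v_{2q} = v_0)` in a graph `G`;
edges and vertices may repeat. -/
structure EvenClosedWalk (G : SimpleGraph V) where
  q : ℕ
  verts : ℕ → V
  adj : ∀ i, i < 2 * q → G.Adj (verts i) (verts (i + 1))
  closed : verts (2 * q) = verts 0

namespace EvenClosedWalk

variable {G : SimpleGraph V}

/-- The `i`-th edge of the walk, as an element of the edge set of `G`. -/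
def edge (w : EvenClosedWalk G) (i : ℕ) (h : i < 2 * w.q) : G.edgeSet :=
  ⟨s(w.verts i, w.verts (i + 1)), w.adj i h⟩

/-- The exponent vector `w⁺` of the monomial `E⁺(w)`, the product of the edges of `w`
in odd position (`1`-indexed). -/
def plusExp (w : EvenClosedWalk G) : G.edgeSet →₀ ℕ :=
  ∑ k : Fin w.q, Finsupp.single (w.edge (2 * (k : ℕ)) (by have := k.isLt; omega)) 1

/-- The exponent vector `w⁻` of the monomial `E⁻(w)`, the product of the edges of `w`
in even position (`1`-indexed). -/
def minusExp (w : EvenClosedWalk G) : G.edgeSet →₀ ℕ :=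
  ∑ k : Fin w.q, Finsupp.single (w.edge (2 * (k : ℕ) + 1) (by have := k.isLt; omega)) 1

end EvenClosedWalk

/-- The monomial `E⁺(w)`. -/
def Eplus (K : Type*) [Field K] {G : SimpleGraph V} (w : EvenClosedWalk G) :
    MvPolynomial G.edgeSet K :=
  monomial w.plusExp 1

/-- The monomial `E⁻(w)`. -/
def Eminus (K : Type*) [Field K] {G : SimpleGraph V} (w : EvenClosedWalk G) :
    MvPolynomial G.edgeSet K :=
  monomial w.minusExp 1

/-- The binomial `B_w = E⁺(w) - E⁻(w)` of an even closed walk. -/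
def Bw (K : Type*) [Field K] {G : SimpleGraph V} (w : EvenClosedWalk G) :
    MvPolynomial G.edgeSet K :=
  binom K w.plusExp w.minusExp

namespace EvenClosedWalk

variable {G : SimpleGraph V}

/-- The number of positions of the walk at which the edge `e` appears. -/
def count [DecidableEq V] (w : EvenClosedWalk G) (e : Sym2 V) : ℕ :=
  ((Finset.range (2 * w.q)).filter fun i => e = s(w.verts i, w.verts (i + 1))).card

/-- The subgraph `𝐰` of `G` spanned by the edges of the walk `w`. -/
def graph (w : EvenClosedWalk G) : SimpleGraph V :=
  SimpleGraph.fromEdgeSet {e | ∃ i, ∃ _ : i < 2 * w.q, e = s(w.verts i, w.verts (i + 1))}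

/-- The set `w⁺` of edges of `w` in odd position (`1`-indexed). -/
def plusEdges (w : EvenClosedWalk G) : Set (Sym2 V) :=
  {e | ∃ k, ∃ _ : k < w.q, e = s(w.verts (2 * k), w.verts (2 * k + 1))}

/-- The set `w⁻` of edges of `w` in even position (`1`-indexed). -/
def minusEdges (w : EvenClosedWalk G) : Set (Sym2 V) :=
  {e | ∃ k, ∃ _ : k < w.q, e = s(w.verts (2 * k + 1), w.verts (2 * k + 2))}

/-- An even closed walk is primitive if it is nontrivial and there is no even closed
subwalk `ξ` of smaller length with `E⁺(ξ) ∣ E⁺(w)` and `E⁻(ξ) ∣ E⁻(w)`. -/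
def IsPrimitive (w : EvenClosedWalk G) : Prop :=
  0 < w.q ∧ ∀ ξ : EvenClosedWalk G, 0 < ξ.q → ξ.q < w.q →
    ¬(ξ.plusExp ≤ w.plusExp ∧ ξ.minusExp ≤ w.minusExp)

/-- The walk `w` is a cycle: it visits no vertex twice. -/
def IsCycle (w : EvenClosedWalk G) : Prop :=
  2 ≤ w.q ∧ ∀ i j, i < 2 * w.q → j < 2 * w.q → w.verts i = w.verts j → i = j

end EvenClosedWalk

/-! ### Cut vertices, cut edges, blocks, sinks -/

/-- `v` is a cut vertex of `H`: removing `v` (and the edges through it) disconnects two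
vertices different from `v` that were connected in `H`. -/
def IsCutVertex (H : SimpleGraph V) (v : V) : Prop :=
  ∃ a b, a ≠ v ∧ b ≠ v ∧ H.Reachable a b ∧
    ¬(SimpleGraph.fromEdgeSet {e | e ∈ H.edgeSet ∧ v ∉ e}).Reachable a b

/-- `e` is a cut edge of `H`: removing it disconnects two vertices connected in `H`. -/
def IsCutEdge (H : SimpleGraph V) (e : Sym2 V) : Prop :=
  e ∈ H.edgeSet ∧ ∃ a b, H.Reachable a b ∧ ¬(H.deleteEdges {e}).Reachable a b

/-- `H` is biconnected: it has an edge, it is connected (on its support),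
and it has no cut vertex. -/
def IsBiconnected (H : SimpleGraph V) : Prop :=
  H.edgeSet.Nonempty ∧ (∀ a ∈ H.support, ∀ b ∈ H.support, H.Reachable a b) ∧
    ∀ v, ¬IsCutVertex H v

/-- `B` is a block of `H`: a maximal biconnected subgraph. -/
def IsBlock (H B : SimpleGraph V) : Prop :=
  B ≤ H ∧ IsBiconnected B ∧ ∀ B', B ≤ B' → B' ≤ H → IsBiconnected B' → B' = B

/-- A graph is a cycle (graph): its edge set is the edge set of a cycle of length `≥ 3`. -/
def IsCycleGraph (B : SimpleGraph V) : Prop :=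
  ∃ (n : ℕ) (f : ℕ → V), 3 ≤ n ∧
    (∀ i j, i < n → j < n → f i = f j → i = j) ∧
    B.edgeSet = {e | ∃ i, ∃ _ : i < n, e = s(f i, f ((i + 1) % n))}

/-- `v` is a sink of the block `B` of the walk `w`: a common vertex of two odd
(or two even) edges of the walk belonging to `B`. -/
def IsSinkOf {G : SimpleGraph V} (w : EvenClosedWalk G) (B : SimpleGraph V) (v : V) : Prop :=
  ∃ e₁ e₂ : Sym2 V, e₁ ≠ e₂ ∧ e₁ ∈ B.edgeSet ∧ e₂ ∈ B.edgeSet ∧ v ∈ e₁ ∧ v ∈ e₂ ∧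
    ((e₁ ∈ w.plusEdges ∧ e₂ ∈ w.plusEdges) ∨ (e₁ ∈ w.minusEdges ∧ e₂ ∈ w.minusEdges))

/-- `B` is a pure cyclic block of the walk `w`: a block of `𝐰` which is a cycle all of whose
edges lie in `w⁺`, or all in `w⁻`. -/
def IsPureCyclicBlock {G : SimpleGraph V} (w : EvenClosedWalk G) (B : SimpleGraph V) : Prop :=
  IsBlock w.graph B ∧ IsCycleGraph B ∧
    (B.edgeSet ⊆ w.plusEdges ∨ B.edgeSet ⊆ w.minusEdges)

/-- A primitive walk is mixed if it has no pure cyclic block. -/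
def EvenClosedWalk.IsMixed {G : SimpleGraph V} (w : EvenClosedWalk G) : Prop :=
  ∀ B : SimpleGraph V, ¬IsPureCyclicBlock w B

/-!
The graph is a central triangle whose three vertices are joined by paths of length `Q + 1` to
three further triangles. Binomials of `I_G` with disjoint supports are the binomials
`x^{c⁺} - x^{c⁻}` of integer vectors `c` in the kernel of the incidence matrix, and this kernel is
three-dimensional: `c` is determined by its values `± b j` on the three end triangles, with
`∓ 2 b j` alternating along the paths and `b j + b (j + 1) - b (j + 2)` on the central triangle.
The degree of the binomial is half the `ℓ¹`-norm of `c`.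

For `b = (1, 1, 1)` every edge is used and the binomial is primitive: a conformal kernel vector
below it has `0 ≤ b j ≤ 1` and `0 ≤ b j + b (j + 1) - b (j + 2) ≤ 1`, so `b = 0` or `b = 1`; its
degree is `3 Q + 9`. For a circuit, a strictly smaller support is available unless some `b k = 0`
and the other two entries agree up to sign, and irreducibility then forces all entries into
`{0, ± 1}`; the degree is at most `2 Q + 7`.
-/

section Binomial

variable {u v : σ →₀ ℕ}

theorem coeff_binom [DecidableEq σ] (u v m : σ →₀ ℕ) :
    (binom K u v).coeff m = (if u = m then 1 else 0) - if v = m then 1 else 0 := by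
  simp [binom, coeff_monomial]

theorem support_binom [DecidableEq σ] (h : u ≠ v) : (binom K u v).support = {u, v} := by
  ext m
  by_cases hu : u = m <;> by_cases hv : v = m <;> simp_all [coeff_binom, eq_comm]

theorem vars_binom [DecidableEq σ] (h : u ≠ v) :
    (binom K u v).vars = u.support ∪ v.support := by
  ext i
  simp [mem_vars_iff_mem_support, support_binom h]

theorem binom_ne_zero (h : u ≠ v) : binom K u v ≠ 0 := by
  classical
  intro h0
  have := congrArg (coeff u) h0
  simp [coeff_binom, Ne.symm h] at this

theorem totalDegree_binom (h : u ≠ v) :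
    (binom K u v).totalDegree = max u.degree v.degree := by
  classical
  simp [totalDegree, support_binom h, Finsupp.degree_apply, Finsupp.sum]

theorem totalDegree_binom_pos (h : u ≠ v) : 0 < (binom K u v).totalDegree := by
  rw [totalDegree_binom h, lt_max_iff, pos_iff_ne_zero, pos_iff_ne_zero,
    Ne, Finsupp.degree_eq_zero_iff, Ne, Finsupp.degree_eq_zero_iff]
  by_contra! h0
  exact h (h0.1.trans h0.2.symm)

theorem not_irreducible_of_eq_mul {f p q : MvPolynomial σ K} (h : f = p * q)
    (hp : 0 < p.totalDegree) (hq : 0 < q.totalDegree) : ¬Irreducible f := by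
  intro hf
  rcases hf.isUnit_or_isUnit h with hu | hu
  · exact hp.ne' (isUnit_iff_totalDegree_of_isReduced.mp hu).2
  · exact hq.ne' (isUnit_iff_totalDegree_of_isReduced.mp hu).2

theorem binom_self (u : σ →₀ ℕ) : binom K u u = 0 := sub_self _

theorem Irreducible.binom_ne (hirr : Irreducible (binom K u v)) : u ≠ v := by
  rintro rfl
  exact hirr.ne_zero (binom_self u)

theorem Irreducible.binom_disjoint (hirr : Irreducible (binom K u v)) (i : σ) :
    u i = 0 ∨ v i = 0 := by
  by_contra! hi
  -- otherwise `x^{u ⊓ v}` is a proper factor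
  set m := u ⊓ v
  have hmu : m ≤ u := inf_le_left
  have hmv : m ≤ v := inf_le_right
  have hfac : binom K u v = monomial m 1 * binom K (u - m) (v - m) := by
    rw [binom, binom, mul_sub, monomial_mul, monomial_mul, one_mul,
      add_tsub_cancel_of_le hmu, add_tsub_cancel_of_le hmv]
  refine not_irreducible_of_eq_mul hfac ?_ (totalDegree_binom_pos fun h => ?_) hirr
  · rw [totalDegree_monomial _ one_ne_zero]
    exact lt_of_lt_of_le (by simp [m]; omega) (Finsupp.le_degree i m)
  · apply hirr.binom_ne
    rw [← tsub_add_cancel_of_le hmu, h, tsub_add_cancel_of_le hmv]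

theorem not_irreducible_binom_nsmul (huv : u ≠ v) {d : ℕ} (hd : 2 ≤ d) :
    ¬Irreducible (binom K (d • u) (d • v)) := by
  set g : MvPolynomial σ K :=
    ∑ i ∈ Finset.range d, monomial u 1 ^ i * monomial v 1 ^ (d - 1 - i)
  have hfac : binom K (d • u) (d • v) = g * binom K u v := by
    rw [binom, binom, geom_sum₂_mul, monomial_pow, monomial_pow, one_pow]
  have hne : d • u ≠ d • v := fun h => huv (nsmul_right_injective (by omega) h)
  have hdeg := congrArg totalDegree hfac
  rw [totalDegree_mul_of_isDomain (fun hg => binom_ne_zero hne (by rw [hfac, hg, zero_mul]))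
    (binom_ne_zero huv), totalDegree_binom hne, totalDegree_binom huv, map_nsmul, map_nsmul,
    smul_eq_mul, smul_eq_mul, ← mul_max_of_nonneg _ _ (Nat.zero_le d)] at hdeg
  have hpos := totalDegree_binom_pos (K := K) huv
  rw [totalDegree_binom huv] at hpos
  exact not_irreducible_of_eq_mul hfac (by nlinarith) (totalDegree_binom_pos huv)

end Binomial

section IntegerVector

variable [Fintype σ]

def posExp (c : σ → ℤ) : σ →₀ ℕ :=
  Finsupp.equivFunOnFinite.symm fun i => (c i).toNat

def vecBinom (K : Type*) [Field K] (c : σ → ℤ) : MvPolynomial σ K :=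
  binom K (posExp c) (posExp (-c))

@[simp]
theorem posExp_apply (c : σ → ℤ) (i : σ) : posExp c i = (c i).toNat := rfl

theorem posExp_ne_posExp_neg {c : σ → ℤ} (hc : c ≠ 0) : posExp c ≠ posExp (-c) := by
  intro h
  obtain ⟨i, hi⟩ := Function.ne_iff.mp hc
  have := DFunLike.congr_fun h i
  simp only [posExp_apply, Pi.neg_apply] at this
  simp only [Pi.zero_apply] at hi
  omega

theorem binom_eq_vecBinom {u v : σ →₀ ℕ} (h : ∀ i, u i = 0 ∨ v i = 0) :
    binom K u v = vecBinom K fun i => (u i : ℤ) - v i := by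
  have hu : u = posExp fun i => (u i : ℤ) - v i := by
    ext i; rcases h i with h | h <;> simp [h]
  have hv : v = posExp (-fun i => (u i : ℤ) - v i) := by
    ext i; rcases h i with h | h <;> simp [h]
  rw [vecBinom, ← hu, ← hv]

theorem mem_vars_vecBinom {c : σ → ℤ} (hc : c ≠ 0) (i : σ) :
    i ∈ (vecBinom K c).vars ↔ c i ≠ 0 := by
  classical
  rw [vecBinom, vars_binom (posExp_ne_posExp_neg hc)]
  simp only [Finset.mem_union, Finsupp.mem_support_iff, posExp_apply, Pi.neg_apply]
  omega

theorem totalDegree_vecBinom {c : σ → ℤ} (hc : c ≠ 0)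
    (hdeg : (posExp c).degree = (posExp (-c)).degree) :
    2 * ((vecBinom K c).totalDegree : ℤ) = ∑ i, |c i| := by
  rw [vecBinom, totalDegree_binom (posExp_ne_posExp_neg hc), ← hdeg, max_self]
  calc 2 * ((posExp c).degree : ℤ) = (posExp c).degree + (posExp (-c)).degree := by
        rw [hdeg]; ring
    _ = ∑ i, |c i| := by
        simp only [Finsupp.degree_eq_sum, posExp_apply, Pi.neg_apply, Nat.cast_sum,
          ← Finset.sum_add_distrib]
        exact Finset.sum_congr rfl fun i _ => by rw [abs_eq_max_neg]; omega

theorem posExp_smul_of_nonneg {p : ℤ} (hp : 0 ≤ p) (c : σ → ℤ) :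
    posExp (p • c) = p.toNat • posExp c := by
  ext i
  rcases le_total 0 (c i) with hc | hc
  · simp only [posExp_apply, Pi.smul_apply, smul_eq_mul, Finsupp.smul_apply]
    zify [mul_nonneg hp hc, hp, hc]
    rw [Int.toNat_of_nonneg (mul_nonneg hp hc), Int.toNat_of_nonneg hp, Int.toNat_of_nonneg hc]
  · simp [Int.toNat_of_nonpos hc, Int.toNat_of_nonpos (mul_nonpos_of_nonneg_of_nonpos hp hc)]

theorem not_irreducible_vecBinom_smul {c : σ → ℤ} (hc : c ≠ 0) {p : ℤ} (hp : 2 ≤ |p|) :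
    ¬Irreducible (vecBinom K (p • c)) := by
  wlog hp0 : 0 ≤ p generalizing p c
  · simpa using this (neg_ne_zero.mpr hc) (p := -p) (by rwa [abs_neg]) (by omega)
  rw [abs_of_nonneg hp0] at hp
  rw [vecBinom, posExp_smul_of_nonneg hp0, ← smul_neg, posExp_smul_of_nonneg hp0]
  exact not_irreducible_binom_nsmul (posExp_ne_posExp_neg hc) (by omega)

theorem posExp_eq_of_le {c : σ → ℤ} {w z : σ →₀ ℕ} (hw : w ≤ posExp c) (hz : z ≤ posExp (-c))
    (h : ∀ i, (w i : ℤ) - z i = c i) : w = posExp c ∧ z = posExp (-c) := by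
  constructor <;> ext i <;> have := h i <;> have := hw i <;> have := hz i <;>
    simp only [posExp_apply, Pi.neg_apply] at * <;> omega

end IntegerVector

section GraphToricIdeal

variable {W : Type*} (G : SimpleGraph W)

def edgeExp (e : Sym2 W) : W →₀ ℕ :=
  Sym2.lift ⟨fun a b => Finsupp.single a 1 + Finsupp.single b 1, fun _ _ => add_comm _ _⟩ e

theorem edgeExp_mk (a b : W) : edgeExp s(a, b) = Finsupp.single a 1 + Finsupp.single b 1 :=
  rfl

theorem degree_edgeExp (e : Sym2 W) : (edgeExp e).degree = 2 := by
  induction e using Sym2.ind with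
  | _ a b => simp [edgeExp_mk]

theorem edgeExp_apply [DecidableEq W] {e : Sym2 W} (he : ¬e.IsDiag) (x : W) :
    edgeExp e x = if x ∈ e then 1 else 0 := by
  induction e using Sym2.ind with
  | _ a b =>
    have hab : a ≠ b := fun h => he (by simp [h])
    by_cases hxa : x = a <;> by_cases hxb : x = b <;>
      simp_all [edgeExp_mk, eq_comm]

def vertexDegree (u : G.edgeSet →₀ ℕ) : W →₀ ℕ :=
  u.sum fun e k => k • edgeExp (e : Sym2 W)

theorem degree_vertexDegree (u : G.edgeSet →₀ ℕ) :
    (vertexDegree G u).degree = 2 * u.degree := by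
  rw [vertexDegree, map_finsuppSum]
  simp only [map_nsmul, degree_edgeExp, smul_eq_mul]
  rw [Finsupp.degree_apply, Finsupp.sum, Finset.mul_sum]
  simp [mul_comm]

theorem aeval_edgeImage_monomial (u : G.edgeSet →₀ ℕ) :
    aeval (fun e : G.edgeSet => edgeImage K (e : Sym2 W)) (monomial u (1 : K)) =
      monomial (vertexDegree G u) 1 := by
  have hedge : ∀ e : Sym2 W, edgeImage K e = monomial (edgeExp e) 1 := by
    intro e
    induction e using Sym2.ind with
    | _ a b => simp [edgeImage, edgeExp_mk, X, monomial_mul]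
  simp only [aeval_monomial, map_one, one_mul, hedge, monomial_pow, vertexDegree,
    monomial_finsupp_sum_index, one_pow]

theorem binom_mem_graphToricIdeal_iff (u v : G.edgeSet →₀ ℕ) :
    binom K u v ∈ graphToricIdeal K G ↔ vertexDegree G u = vertexDegree G v := by
  rw [graphToricIdeal, RingHom.mem_ker, AlgHom.toRingHom_eq_coe, RingHom.coe_coe, binom,
    map_sub, aeval_edgeImage_monomial, aeval_edgeImage_monomial, sub_eq_zero,
    monomial_eq_monomial_iff]
  simp

theorem degree_eq_of_binom_mem {u v : G.edgeSet →₀ ℕ}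
    (h : binom K u v ∈ graphToricIdeal K G) : u.degree = v.degree := by
  have := congrArg Finsupp.degree ((binom_mem_graphToricIdeal_iff G u v).mp h)
  rw [degree_vertexDegree, degree_vertexDegree] at this
  omega

variable [Fintype G.edgeSet]

theorem two_mul_totalDegree_vecBinom {c : G.edgeSet → ℤ} (hc : c ≠ 0)
    (hmem : vecBinom K c ∈ graphToricIdeal K G) :
    2 * ((vecBinom K c).totalDegree : ℤ) = ∑ e, |c e| :=
  totalDegree_vecBinom hc (degree_eq_of_binom_mem G hmem)

variable [DecidableEq W]

/-- The `x`-entry of the product of the vertex-edge incidence matrix of `G` with `c`. -/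
def incidenceSum (c : G.edgeSet → ℤ) (x : W) : ℤ :=
  ∑ e : G.edgeSet, if x ∈ (e : Sym2 W) then c e else 0

theorem vertexDegree_apply (u : G.edgeSet →₀ ℕ) (x : W) :
    vertexDegree G u x = ∑ e : G.edgeSet, if x ∈ (e : Sym2 W) then u e else 0 := by
  rw [vertexDegree, Finsupp.sum_apply, Finsupp.sum_fintype _ _ (by simp)]
  refine Finset.sum_congr rfl fun e _ => ?_
  rw [Finsupp.smul_apply, edgeExp_apply (G.not_isDiag_of_mem_edgeSet e.2)]
  split_ifs <;> simp

theorem incidenceSum_sub (u v : G.edgeSet →₀ ℕ) (x : W) :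
    incidenceSum G (fun e => (u e : ℤ) - v e) x =
      (vertexDegree G u x : ℤ) - vertexDegree G v x := by
  simp only [incidenceSum, vertexDegree_apply, Nat.cast_sum, ← Finset.sum_sub_distrib]
  refine Finset.sum_congr rfl fun e _ => ?_
  split_ifs <;> simp

theorem binom_mem_graphToricIdeal_iff_incidenceSum (u v : G.edgeSet →₀ ℕ) :
    binom K u v ∈ graphToricIdeal K G ↔
      ∀ x, incidenceSum G (fun e => (u e : ℤ) - v e) x = 0 := by
  simp only [binom_mem_graphToricIdeal_iff, Finsupp.ext_iff, incidenceSum_sub, sub_eq_zero,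
    Nat.cast_inj]

theorem vecBinom_mem_graphToricIdeal_iff (c : G.edgeSet → ℤ) :
    vecBinom K c ∈ graphToricIdeal K G ↔ ∀ x, incidenceSum G c x = 0 := by
  rw [vecBinom, binom_mem_graphToricIdeal_iff_incidenceSum]
  have hc : (fun e => ((posExp c e : ℕ) : ℤ) - posExp (-c) e) = c := by
    ext e; simp only [posExp_apply, Pi.neg_apply]; omega
  rw [hc]

end GraphToricIdeal

section Fin3

variable (k : Fin 3)

theorem fin_three_cases (j : Fin 3) : j = 0 ∨ j = 1 ∨ j = 2 := by
  fin_cases j <;> simp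

theorem fin_three_eq_or (j : Fin 3) : j = k ∨ j = k + 1 ∨ j = k + 2 := by
  revert j k; decide

theorem fin_three_add_one_add_one : k + 1 + 1 = k + 2 := by revert k; decide
theorem fin_three_add_one_add_two : k + 1 + 2 = k := by revert k; decide
theorem fin_three_add_two_add_one : k + 2 + 1 = k := by revert k; decide
theorem fin_three_add_two_add_two : k + 2 + 2 = k + 1 := by revert k; decide

end Fin3

namespace TriangleStar

variable (Q : ℕ)

/-- Vertex `(j, i)` lies on the `j`-th arm at distance `i` from the central triangle; the
positions `Q + 1, Q + 2, Q + 3` of each arm carry the triangle at its end. -/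
abbrev Vert := Fin 3 × Fin (Q + 4)

abbrev EdgeIndex := (Fin 3 × Fin (Q + 3)) ⊕ Fin 3 ⊕ Fin 3

def ends : EdgeIndex Q → Vert Q × Vert Q
  | .inl (j, i) => ((j, i.castSucc), (j, i.succ))
  | .inr (.inl j) => ((j, 0), (j + 1, 0))
  | .inr (.inr j) => ((j, ⟨Q + 1, by omega⟩), (j, ⟨Q + 3, by omega⟩))

def graph : SimpleGraph (Vert Q) :=
  SimpleGraph.fromRel fun x y => ∃ a, ends Q a = (x, y)

theorem ends_ne (a : EdgeIndex Q) : (ends Q a).1 ≠ (ends Q a).2 := by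
  rcases a with ⟨j, i⟩ | j | j <;> simp [ends, Prod.ext_iff, Fin.ext_iff]

theorem adj_ends (a : EdgeIndex Q) : (graph Q).Adj (ends Q a).1 (ends Q a).2 :=
  (SimpleGraph.fromRel_adj _ _ _).mpr ⟨ends_ne Q a, Or.inl ⟨a, rfl⟩⟩

theorem ends_injective : Function.Injective (ends Q) := by
  rintro (⟨j, i⟩ | j | j) (⟨j', i'⟩ | j' | j') h <;>
    simp only [ends, Prod.mk.injEq, Sum.inl.injEq, Sum.inr.injEq, Sum.inl_ne_inr,
      Sum.inr_ne_inl, Fin.ext_iff, Fin.val_add, Fin.val_castSucc, Fin.val_succ,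
      Fin.val_zero] at h ⊢ <;> omega

theorem ends_ne_swap (a a' : EdgeIndex Q) : ends Q a ≠ (ends Q a').swap := by
  rcases a with ⟨j, i⟩ | j | j <;> rcases a' with ⟨j', i'⟩ | j' | j' <;>
    simp only [ends, Prod.swap_prod_mk, ne_eq, Prod.mk.injEq, Fin.ext_iff, Fin.val_add,
      Fin.val_castSucc, Fin.val_succ, Fin.val_zero] <;> omega

def edgeOf (a : EdgeIndex Q) : (graph Q).edgeSet :=
  ⟨s((ends Q a).1, (ends Q a).2), adj_ends Q a⟩

theorem edgeOf_bijective : Function.Bijective (edgeOf Q) := by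
  constructor
  · intro a a' h
    rcases Sym2.eq_iff.mp (congrArg Subtype.val h) with ⟨h1, h2⟩ | ⟨h1, h2⟩
    · exact ends_injective Q (Prod.ext h1 h2)
    · exact absurd (Prod.ext h1 h2) (ends_ne_swap Q a a')
  · rintro ⟨e, he⟩
    induction e using Sym2.ind with
    | _ x y =>
      rw [SimpleGraph.mem_edgeSet, graph, SimpleGraph.fromRel_adj] at he
      rcases he.2 with ⟨a, ha⟩ | ⟨a, ha⟩
      · exact ⟨a, Subtype.ext (by simp [edgeOf, ha])⟩
      · exact ⟨a, Subtype.ext (by simp [edgeOf, ha, Sym2.eq_swap])⟩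

def edgeEquiv : EdgeIndex Q ≃ (graph Q).edgeSet :=
  Equiv.ofBijective _ (edgeOf_bijective Q)

instance : Fintype (graph Q).edgeSet := Fintype.ofEquiv _ (edgeEquiv Q)

theorem graph_connected : (graph Q).Connected := by
  have harm : ∀ j (k : Fin (Q + 4)), (graph Q).Reachable (j, 0) (j, k) := by
    intro j k
    induction k using Fin.induction with
    | zero => rfl
    | succ i ih => exact ih.trans (adj_ends Q (.inl (j, i))).reachable
  have hcenter : ∀ j, (graph Q).Reachable (0, 0) (j, 0) := by
    have h01 := (adj_ends Q (.inr (.inl 0))).reachable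
    have h12 := (adj_ends Q (.inr (.inl 1))).reachable
    intro j
    obtain rfl | rfl | rfl := fin_three_cases j
    · rfl
    · exact h01
    · exact h01.trans h12
  rw [SimpleGraph.connected_iff_exists_forall_reachable]
  exact ⟨(0, 0), fun ⟨j, k⟩ => (hcenter j).trans (harm j k)⟩

theorem mem_edgeOf {x : Vert Q} {a : EdgeIndex Q} :
    x ∈ (edgeOf Q a : Sym2 (Vert Q)) ↔ x = (ends Q a).1 ∨ x = (ends Q a).2 :=
  Sym2.mem_iff

theorem incidenceSum_eq (c : (graph Q).edgeSet → ℤ) (x : Vert Q) (A : Finset (EdgeIndex Q))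
    (hA : ∀ a, x = (ends Q a).1 ∨ x = (ends Q a).2 ↔ a ∈ A) :
    incidenceSum (graph Q) c x = ∑ a ∈ A, c (edgeOf Q a) := by
  rw [incidenceSum, ← (edgeEquiv Q).sum_comp, ← Finset.sum_filter]
  congr 1
  ext a
  simp [edgeEquiv, mem_edgeOf, hA]

variable {Q}

def pathEdge (j : Fin 3) (i : ℕ) (hi : i < Q + 3) : (graph Q).edgeSet :=
  edgeOf Q (.inl (j, ⟨i, hi⟩))

def centerEdge (j : Fin 3) : (graph Q).edgeSet := edgeOf Q (.inr (.inl j))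

def chordEdge (j : Fin 3) : (graph Q).edgeSet := edgeOf Q (.inr (.inr j))

section Incidence

variable (c : (graph Q).edgeSet → ℤ) (j : Fin 3)

theorem incidenceSum_center :
    incidenceSum (graph Q) c (j, 0) =
      c (centerEdge j) + c (centerEdge (j + 2)) + c (pathEdge j 0 (by omega)) := by
  rw [incidenceSum_eq Q c _ {.inr (.inl j), .inr (.inl (j + 2)), .inl (j, 0)}]
  · rw [Finset.sum_insert, Finset.sum_pair (by simp), ← add_assoc]
    · rfl
    · simp only [Finset.mem_insert, Finset.mem_singleton, Sum.inr.injEq, Sum.inl.injEq,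
        Sum.inr_ne_inl, or_false, Fin.ext_iff, Fin.val_add, Fin.val_two]
      omega
  · rintro (⟨j', i'⟩ | j' | j') <;>
      simp only [ends, Finset.mem_insert, Finset.mem_singleton, Prod.mk.injEq, Sum.inl.injEq,
        Sum.inr.injEq, Sum.inl_ne_inr, Sum.inr_ne_inl, Fin.ext_iff, Fin.val_add, Fin.val_castSucc,
        Fin.val_succ, Fin.val_zero, Fin.val_one, Fin.val_two, and_true, or_false, false_or,
        iff_false] <;> omega

theorem incidenceSum_path {i : ℕ} (hi : i + 1 < Q + 3) (hiQ : i ≠ Q) :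
    incidenceSum (graph Q) c (j, ⟨i + 1, by omega⟩) =
      c (pathEdge j i (by omega)) + c (pathEdge j (i + 1) hi) := by
  rw [incidenceSum_eq Q c _ {.inl (j, ⟨i, by omega⟩), .inl (j, ⟨i + 1, hi⟩)}]
  · rw [Finset.sum_pair (by simp)]
    rfl
  · rintro (⟨j', i'⟩ | j' | j') <;>
      simp only [ends, Finset.mem_insert, Finset.mem_singleton, Prod.mk.injEq, Sum.inl.injEq,
        Sum.inr_ne_inl, Fin.ext_iff, Fin.val_add, Fin.val_castSucc, Fin.val_succ, Fin.val_zero,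
        Fin.val_one, or_false, iff_false] <;> omega

theorem incidenceSum_junction :
    incidenceSum (graph Q) c (j, ⟨Q + 1, by omega⟩) =
      c (pathEdge j Q (by omega)) + c (pathEdge j (Q + 1) (by omega)) + c (chordEdge j) := by
  rw [incidenceSum_eq Q c _ {.inl (j, ⟨Q, by omega⟩), .inl (j, ⟨Q + 1, by omega⟩), .inr (.inr j)}]
  · rw [Finset.sum_insert (by simp), Finset.sum_pair (by simp), ← add_assoc]
    rfl
  · rintro (⟨j', i'⟩ | j' | j') <;>
      simp only [ends, Finset.mem_insert, Finset.mem_singleton, Prod.mk.injEq, Sum.inl.injEq,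
        Sum.inr.injEq, Sum.inl_ne_inr, Sum.inr_ne_inl, Fin.ext_iff, Fin.val_add, Fin.val_castSucc,
        Fin.val_succ, Fin.val_zero, Fin.val_one, and_true, or_false, false_or,
        iff_false] <;> omega

theorem incidenceSum_tip :
    incidenceSum (graph Q) c (j, ⟨Q + 3, by omega⟩) =
      c (pathEdge j (Q + 2) (by omega)) + c (chordEdge j) := by
  rw [incidenceSum_eq Q c _ {.inl (j, ⟨Q + 2, by omega⟩), .inr (.inr j)}]
  · rw [Finset.sum_pair (by simp)]
    rfl
  · rintro (⟨j', i'⟩ | j' | j') <;>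
      simp only [ends, Finset.mem_insert, Finset.mem_singleton, Prod.mk.injEq, Sum.inl.injEq,
        Sum.inr.injEq, Sum.inl_ne_inr, Sum.inr_ne_inl, Fin.ext_iff, Fin.val_add, Fin.val_castSucc,
        Fin.val_succ, Fin.val_zero, Fin.val_one, and_true, or_false, false_or,
        iff_false] <;> omega

end Incidence

variable (Q) in
/-- The value on the `i`-th edge of arm `j` of the kernel vector with arm parameters `b`;
the edges `Q + 1` and `Q + 2` are the two non-chord edges of the end triangle. -/
def pathValue (b : Fin 3 → ℤ) (j : Fin 3) (i : ℕ) : ℤ :=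
  if i ≤ Q then -2 * (-1) ^ i * b j else if i = Q + 1 then (-1) ^ Q * b j else -((-1) ^ Q * b j)

def centerValue (b : Fin 3 → ℤ) (j : Fin 3) : ℤ :=
  b j + b (j + 1) - b (j + 2)

variable (Q) in
def edgeValue (b : Fin 3 → ℤ) : EdgeIndex Q → ℤ
  | .inl (j, i) => pathValue Q b j i
  | .inr (.inl j) => centerValue b j
  | .inr (.inr j) => (-1) ^ Q * b j

variable (Q) in
def kernelVec (b : Fin 3 → ℤ) (e : (graph Q).edgeSet) : ℤ :=
  edgeValue Q b ((edgeEquiv Q).symm e)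

def armParams (c : (graph Q).edgeSet → ℤ) (j : Fin 3) : ℤ :=
  (-1) ^ Q * c (chordEdge j)

theorem chordEdge_eq_armParams (c : (graph Q).edgeSet → ℤ) (j : Fin 3) :
    c (chordEdge j) = (-1) ^ Q * armParams c j := by
  rw [armParams, ← mul_assoc, ← pow_add, ← two_mul, pow_mul]
  simp

section KernelVector

variable (b : Fin 3 → ℤ)

@[simp]
theorem kernelVec_edgeOf (a : EdgeIndex Q) : kernelVec Q b (edgeOf Q a) = edgeValue Q b a := by
  rw [kernelVec, show edgeOf Q a = edgeEquiv Q a from rfl, Equiv.symm_apply_apply]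

@[simp]
theorem kernelVec_pathEdge (j : Fin 3) (i : ℕ) (hi : i < Q + 3) :
    kernelVec Q b (pathEdge j i hi) = pathValue Q b j i :=
  kernelVec_edgeOf b _

@[simp]
theorem kernelVec_centerEdge (j : Fin 3) :
    kernelVec Q b (centerEdge j) = centerValue b j :=
  kernelVec_edgeOf b _

@[simp]
theorem kernelVec_chordEdge (j : Fin 3) : kernelVec Q b (chordEdge j) = (-1) ^ Q * b j :=
  kernelVec_edgeOf b _

theorem incidenceSum_kernelVec (x : Vert Q) : incidenceSum (graph Q) (kernelVec Q b) x = 0 := by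
  obtain ⟨j, i, hi⟩ := x
  rcases (by omega : i = 0 ∨ (0 < i ∧ i < Q + 3 ∧ i ≠ Q + 1) ∨ i = Q + 1 ∨ i = Q + 3) with
    rfl | ⟨hi0, hi3, hiQ⟩ | rfl | rfl
  · rw [Fin.mk_zero, incidenceSum_center]
    simp only [kernelVec_centerEdge, kernelVec_pathEdge, centerValue, pathValue, add_assoc,
      Fin.reduceAdd, add_zero, if_pos (Nat.zero_le Q)]
    ring
  · obtain ⟨k, rfl⟩ : ∃ k, i = k + 1 := ⟨i - 1, by omega⟩
    rw [incidenceSum_path _ j hi3 (by omega)]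
    simp only [kernelVec_pathEdge, pathValue]
    split_ifs <;> first | omega | ring
  · rw [incidenceSum_junction]
    simp only [kernelVec_pathEdge, kernelVec_chordEdge, pathValue]
    split_ifs <;> first | omega | ring
  · rw [incidenceSum_tip]
    simp only [kernelVec_pathEdge, kernelVec_chordEdge, pathValue]
    split_ifs <;> omega

theorem kernelVec_smul (p : ℤ) : kernelVec Q (p • b) = p • kernelVec Q b := by
  funext e
  obtain ⟨a, rfl⟩ := (edgeOf_bijective Q).2 e
  rcases a with ⟨j, i⟩ | j | j <;>
    simp only [kernelVec_edgeOf, edgeValue, pathValue, centerValue, Pi.smul_apply, smul_eq_mul] <;>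
    (try split_ifs) <;> ring

@[simp]
theorem kernelVec_zero : kernelVec Q 0 = 0 := by
  simpa using kernelVec_smul (Q := Q) 0 0

theorem sum_abs_pathValue (j : Fin 3) :
    ∑ i ∈ Finset.range (Q + 3), |pathValue Q b j i| = (2 * Q + 4) * |b j| := by
  have hlow : ∀ i ∈ Finset.range (Q + 1), |pathValue Q b j i| = 2 * |b j| := fun i hi => by
    rw [pathValue, if_pos (by simp at hi; omega)]
    simp [abs_mul]
  rw [Finset.sum_range_succ, Finset.sum_range_succ, Finset.sum_congr rfl hlow]
  simp [pathValue, abs_mul]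
  ring

theorem sum_abs_kernelVec :
    ∑ e, |kernelVec Q b e| = (2 * Q + 5) * ∑ j, |b j| + ∑ j, |centerValue b j| := by
  have harm : ∀ j, ∑ i : Fin (Q + 3), |pathValue Q b j i| = (2 * Q + 4) * |b j| := fun j => by
    rw [Fin.sum_univ_eq_sum_range (fun i => |pathValue Q b j i|), sum_abs_pathValue]
  rw [← (edgeEquiv Q).sum_comp]
  simp only [edgeEquiv, Equiv.ofBijective_apply, kernelVec_edgeOf, Fintype.sum_sum_type,
    Fintype.sum_prod_type, edgeValue, harm, abs_mul, abs_pow, abs_neg, abs_one, one_pow, one_mul,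
    ← Finset.mul_sum]
  ring

end KernelVector

section Kernel

variable {c : (graph Q).edgeSet → ℤ}

theorem eq_pathValue (hc : ∀ x, incidenceSum (graph Q) c x = 0) (j : Fin 3) {i : ℕ}
    (hi : i < Q + 3) :
    c (pathEdge j i hi) = pathValue Q (armParams c) j i := by
  have hchord := chordEdge_eq_armParams c j
  have htip : c (pathEdge j (Q + 2) (by omega)) = -((-1) ^ Q * armParams c j) := by
    have := hc (j, ⟨Q + 3, by omega⟩)
    rw [incidenceSum_tip, hchord] at this
    linarith
  have hmid : c (pathEdge j (Q + 1) (by omega)) = (-1) ^ Q * armParams c j := by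
    have := hc (j, ⟨Q + 2, by omega⟩)
    rw [incidenceSum_path c j (i := Q + 1) (by omega) (by omega), htip] at this
    linarith
  have hpath : ∀ k i (hi : i + k = Q),
      c (pathEdge j i (by omega)) = -2 * (-1) ^ i * armParams c j := by
    intro k
    induction k with
    | zero =>
      intro i hi
      obtain rfl : i = Q := hi
      have := hc (j, ⟨i + 1, by omega⟩)
      rw [incidenceSum_junction, hmid, hchord] at this
      linarith
    | succ k ih =>
      intro i hi
      have := hc (j, ⟨i + 1, by omega⟩)
      rw [incidenceSum_path c j (i := i) (by omega) (by omega), ih (i + 1) (by omega),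
        pow_succ] at this
      linarith
  rw [pathValue]
  split_ifs with h1 h2
  · exact hpath (Q - i) i (by omega)
  · obtain rfl := h2
    exact hmid
  · obtain rfl : i = Q + 2 := by omega
    exact htip

theorem eq_centerValue (hc : ∀ x, incidenceSum (graph Q) c x = 0) (j : Fin 3) :
    c (centerEdge j) = centerValue (armParams c) j := by
  have hsum : ∀ j, c (centerEdge j) + c (centerEdge (j + 2)) = 2 * armParams c j := fun j => by
    have := hc (j, 0)
    rw [incidenceSum_center, eq_pathValue hc, pathValue, if_pos (Nat.zero_le Q), pow_zero] at this
    linarith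
  have h0 := hsum 0
  have h1 := hsum 1
  have h2 := hsum 2
  simp only [Fin.reduceAdd] at h0 h1 h2
  obtain rfl | rfl | rfl := fin_three_cases j <;> simp only [centerValue, Fin.reduceAdd] <;>
    linarith

theorem eq_kernelVec (hc : ∀ x, incidenceSum (graph Q) c x = 0) :
    c = kernelVec Q (armParams c) := by
  funext e
  obtain ⟨⟨j, i, hi⟩ | j | j, rfl⟩ := (edgeOf_bijective Q).2 e
  · exact (eq_pathValue hc j hi).trans (kernelVec_pathEdge _ j i hi).symm
  · exact (eq_centerValue hc j).trans (kernelVec_centerEdge _ j).symm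
  · exact (chordEdge_eq_armParams c j).trans (kernelVec_chordEdge _ j).symm

end Kernel

variable (Q) in
theorem kernelVec_ne_zero {b : Fin 3 → ℤ} (hb : b ≠ 0) : kernelVec Q b ≠ 0 := by
  obtain ⟨j, hj⟩ := Function.ne_iff.mp hb
  intro h
  have := congrFun h (chordEdge j)
  simp_all

/-- `supp (kernelVec Q b') ⊆ supp (kernelVec Q b)`, read off the parameters. -/
def SupportLE (b' b : Fin 3 → ℤ) : Prop :=
  ∀ j, (b' j ≠ 0 → b j ≠ 0) ∧ (centerValue b' j ≠ 0 → centerValue b j ≠ 0)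

theorem pathValue_ne_zero_iff (b : Fin 3 → ℤ) (j : Fin 3) (i : ℕ) :
    pathValue Q b j i ≠ 0 ↔ b j ≠ 0 := by
  unfold pathValue
  split_ifs <;> simp

variable (Q) in
theorem supportLE_iff {b' b : Fin 3 → ℤ} :
    SupportLE b' b ↔ ∀ e, kernelVec Q b' e ≠ 0 → kernelVec Q b e ≠ 0 := by
  constructor
  · intro h e
    obtain ⟨⟨j, i⟩ | j | j, rfl⟩ := (edgeOf_bijective Q).2 e <;>
      simp only [kernelVec_edgeOf, edgeValue, pathValue_ne_zero_iff, ne_eq, mul_eq_zero,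
        pow_eq_zero_iff', neg_eq_zero, one_ne_zero, false_and, false_or]
    · exact (h j).1
    · exact (h j).2
    · exact (h j).1
  · intro h j
    have harm := h (chordEdge j)
    have hcenter := h (centerEdge j)
    simp only [kernelVec_chordEdge, kernelVec_centerEdge, ne_eq, mul_eq_zero,
      pow_eq_zero_iff', neg_eq_zero, one_ne_zero, false_and, false_or] at harm hcenter
    exact ⟨harm, hcenter⟩

def IsSupportMinimal (b : Fin 3 → ℤ) : Prop :=
  ∀ b', b' ≠ 0 → SupportLE b' b → SupportLE b b'

section Minimal

variable {b : Fin 3 → ℤ}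

theorem exists_eq_zero_of_isSupportMinimal (hmin : IsSupportMinimal b) :
    ∃ k, b k = 0 := by
  by_contra! hb
  have h0 := hb 0
  have h1 := hb 1
  have h2 := hb 2
  obtain ⟨b', hb'2, hb'0, hle⟩ : ∃ b' : Fin 3 → ℤ, b' 2 = 0 ∧ b' ≠ 0 ∧ SupportLE b' b := by
    by_cases hc : centerValue b 0 = 0
    · refine ⟨![1, -1, 0], rfl, fun h => by simpa using congrFun h 0, fun j => ?_⟩
      obtain rfl | rfl | rfl := fin_three_cases j <;> simp [centerValue] at hc ⊢ <;> omega
    · refine ⟨![1, 1, 0], rfl, fun h => by simpa using congrFun h 0, fun j => ?_⟩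
      obtain rfl | rfl | rfl := fin_three_cases j <;> simp [centerValue] at hc ⊢ <;> omega
  exact ((hmin b' hb'0 hle) 2).1 h2 hb'2

theorem eq_or_eq_neg_of_isSupportMinimal (hmin : IsSupportMinimal b)
    (k : Fin 3) (hk : b k = 0) (h1 : b (k + 1) ≠ 0)
    (h2 : b (k + 2) ≠ 0) : b (k + 1) = b (k + 2) ∨ b (k + 1) = -b (k + 2) := by
  by_contra! hne
  set b' : Fin 3 → ℤ := fun j => if j = k then 0 else 1
  -- every central edge is used by `b`, so `b'` has a strictly smaller support
  have hcenter : ∀ j, centerValue b j ≠ 0 := by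
    intro j
    obtain rfl | rfl | rfl := fin_three_eq_or k j <;>
      simp only [centerValue, fin_three_add_one_add_one, fin_three_add_one_add_two,
        fin_three_add_two_add_one, fin_three_add_two_add_two, hk] <;> omega
  have hle : SupportLE b' b := by
    intro j
    refine ⟨fun hj => ?_, fun _ => hcenter j⟩
    obtain rfl | rfl | rfl := fin_three_eq_or k j <;> simp_all [b']
  have := ((hmin b' (fun h => by simpa [b'] using congrFun h (k + 1)) hle) k).2 (hcenter k)
  simp [centerValue, b'] at this

theorem abs_le_one_of_isSupportMinimal (hb : b ≠ 0)
    (hscale : ∀ (p : ℤ) b', b' ≠ 0 → b = p • b' → |p| ≤ 1)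
    (hmin : IsSupportMinimal b) (j : Fin 3) : |b j| ≤ 1 := by
  obtain ⟨k, hk⟩ := exists_eq_zero_of_isSupportMinimal hmin
  obtain ⟨m, hm⟩ : ∃ m, b m ≠ 0 := Function.ne_iff.mp hb
  have hpm : ∀ j, b j = 0 ∨ b j = b m ∨ b j = -b m := by
    intro j
    have h := eq_or_eq_neg_of_isSupportMinimal hmin k hk
    rcases fin_three_eq_or k j with rfl | rfl | rfl
    · exact Or.inl hk
    all_goals rcases fin_three_eq_or k m with rfl | rfl | rfl
    all_goals first | exact absurd hk hm | omega
  have hbm : b = b m • fun j => b j / b m := by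
    funext j
    have hdvd : b m ∣ b j := by
      rcases hpm j with h | h | h <;> rw [h] <;> simp
    exact (Int.mul_ediv_cancel' hdvd).symm
  have hp := hscale _ _ (fun h => by simpa [Int.ediv_self hm] using congrFun h m) hbm
  rcases hpm j with h | h | h <;> rw [h] <;> simp [abs_neg, hp]

end Minimal

variable (Q) in
theorem sum_abs_kernelVec_le {b : Fin 3 → ℤ} {k : Fin 3} (hk : b k = 0) (hb : ∀ j, |b j| ≤ 1) :
    ∑ e, |kernelVec Q b e| ≤ 4 * Q + 14 := by
  have h0 := hb 0
  have h1 := hb 1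
  have h2 := hb 2
  have harm : ∑ j, |b j| ≤ 2 := by
    obtain rfl | rfl | rfl := fin_three_cases k <;> simp only [Fin.sum_univ_three, hk] at * <;>
      simp only [abs_zero] <;> linarith
  have hcenter : ∑ j, |centerValue b j| ≤ 4 := by
    simp only [Fin.sum_univ_three, centerValue, Fin.reduceAdd, abs_eq_max_neg] at *
    obtain rfl | rfl | rfl := fin_three_cases k <;> omega
  calc ∑ e, |kernelVec Q b e| ≤ (2 * Q + 5) * 2 + 4 := by
        rw [sum_abs_kernelVec]
        exact add_le_add (mul_le_mul_of_nonneg_left harm (by positivity)) hcenter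
    _ = 4 * Q + 14 := by ring

theorem eq_zero_or_eq_one_of_bounds {b : Fin 3 → ℤ} (harm : ∀ j, 0 ≤ b j ∧ b j ≤ 1)
    (hcenter : ∀ j, 0 ≤ centerValue b j ∧ centerValue b j ≤ 1) : b = 0 ∨ b = 1 := by
  have h0 := harm 0
  have h1 := harm 1
  have h2 := harm 2
  have c0 := hcenter 0
  have c1 := hcenter 1
  have c2 := hcenter 2
  simp only [centerValue, Fin.reduceAdd] at c0 c1 c2
  rcases (by omega : (b 0 = 0 ∧ b 1 = 0 ∧ b 2 = 0) ∨ (b 0 = 1 ∧ b 1 = 1 ∧ b 2 = 1)) with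
    ⟨e0, e1, e2⟩ | ⟨e0, e1, e2⟩
  · left; funext j; obtain rfl | rfl | rfl := fin_three_cases j <;> assumption
  · right; funext j; obtain rfl | rfl | rfl := fin_three_cases j <;> assumption

section Binomials

variable {K : Type*} [Field K]

variable (Q) in
theorem vecBinom_kernelVec_mem (b : Fin 3 → ℤ) :
    vecBinom K (kernelVec Q b) ∈ graphToricIdeal K (graph Q) :=
  (vecBinom_mem_graphToricIdeal_iff _ _).mpr (incidenceSum_kernelVec b)

theorem isPrimitiveBinomial_kernelVec_one :
    IsPrimitiveBinomial (graphToricIdeal K (graph Q)) (vecBinom K (kernelVec Q 1)) := by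
  refine ⟨_, _, posExp_ne_posExp_neg (kernelVec_ne_zero Q one_ne_zero), rfl,
    vecBinom_kernelVec_mem Q 1, fun w z hwz hmem hw hz => ?_⟩
  obtain ⟨b, hd⟩ : ∃ b, (fun e => (w e : ℤ) - z e) = kernelVec Q b :=
    ⟨_, eq_kernelVec ((binom_mem_graphToricIdeal_iff_incidenceSum _ w z).mp hmem)⟩
  have hbound : ∀ e, min 0 (kernelVec Q 1 e) ≤ kernelVec Q b e ∧
      kernelVec Q b e ≤ max 0 (kernelVec Q 1 e) := fun e => by
    have := hw e
    have := hz e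
    rw [← hd]
    simp only [posExp_apply, Pi.neg_apply] at *
    omega
  have hb : b = 0 ∨ b = 1 := by
    refine eq_zero_or_eq_one_of_bounds (fun j => ?_) (fun j => ?_)
    · have := hbound (chordEdge j)
      simp only [kernelVec_chordEdge, Pi.one_apply, mul_one] at this
      rcases neg_one_pow_eq_or ℤ Q with h | h <;> rw [h] at this <;> omega
    · have := hbound (centerEdge j)
      simpa [centerValue] using this
  rcases hb with hb | hb
  · refine absurd (Finsupp.ext fun e => ?_) hwz
    have := congrFun hd e
    simp only [hb, kernelVec_zero, Pi.zero_apply] at this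
    omega
  · rw [hb] at hd
    exact posExp_eq_of_le hw hz fun e => congrFun hd e

theorem totalDegree_vecBinom_kernelVec_one :
    (vecBinom K (kernelVec Q 1)).totalDegree = 3 * Q + 9 := by
  have h := two_mul_totalDegree_vecBinom _ (kernelVec_ne_zero Q one_ne_zero)
    (vecBinom_kernelVec_mem (K := K) Q 1)
  simp only [sum_abs_kernelVec, centerValue, Fin.sum_univ_three, Pi.one_apply] at h
  norm_num at h
  omega

theorem exists_eq_vecBinom_kernelVec_of_isCircuitBinomial {g : MvPolynomial (graph Q).edgeSet K}
    (hg : IsCircuitBinomial (graphToricIdeal K (graph Q)) g) :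
    ∃ b, b ≠ 0 ∧ g = vecBinom K (kernelVec Q b) := by
  obtain ⟨⟨u, v, huv, rfl⟩, hmem, hirr, -⟩ := hg
  have hc := eq_kernelVec ((binom_mem_graphToricIdeal_iff_incidenceSum _ u v).mp hmem)
  refine ⟨_, fun hb => huv ?_, by rw [binom_eq_vecBinom hirr.binom_disjoint, hc]⟩
  ext e
  have := congrFun hc e
  simp only [hb, kernelVec_zero, Pi.zero_apply] at this
  omega

theorem abs_le_one_of_irreducible {b : Fin 3 → ℤ}
    (hirr : Irreducible (vecBinom K (kernelVec Q b))) {p : ℤ} {b' : Fin 3 → ℤ} (hb' : b' ≠ 0)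
    (h : b = p • b') : |p| ≤ 1 := by
  by_contra! hp
  rw [h, kernelVec_smul] at hirr
  exact not_irreducible_vecBinom_smul (kernelVec_ne_zero Q hb') (by omega) hirr

theorem isSupportMinimal_of_isCircuitBinomial {b : Fin 3 → ℤ}
    (hg : IsCircuitBinomial (graphToricIdeal K (graph Q)) (vecBinom K (kernelVec Q b)))
    (hb : b ≠ 0) : IsSupportMinimal b := by
  intro b' hb' h
  have hvars := hg.2.2.2 (vecBinom K (kernelVec Q b'))
    ⟨_, _, posExp_ne_posExp_neg (kernelVec_ne_zero Q hb'), rfl⟩ (vecBinom_kernelVec_mem Q b')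
    fun e he => (mem_vars_vecBinom (kernelVec_ne_zero Q hb) e).mpr
      ((supportLE_iff Q).mp h e ((mem_vars_vecBinom (kernelVec_ne_zero Q hb') e).mp he))
  refine (supportLE_iff Q).mpr fun e he => ?_
  rw [← mem_vars_vecBinom (K := K) (kernelVec_ne_zero Q hb'), hvars]
  exact (mem_vars_vecBinom (kernelVec_ne_zero Q hb) e).mpr he

theorem totalDegree_le_of_isCircuitBinomial {g : MvPolynomial (graph Q).edgeSet K}
    (hg : IsCircuitBinomial (graphToricIdeal K (graph Q)) g) : g.totalDegree ≤ 2 * Q + 7 := by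
  obtain ⟨b, hb, rfl⟩ := exists_eq_vecBinom_kernelVec_of_isCircuitBinomial hg
  have hmin := isSupportMinimal_of_isCircuitBinomial hg hb
  obtain ⟨k, hk⟩ := exists_eq_zero_of_isSupportMinimal hmin
  have habs := abs_le_one_of_isSupportMinimal hb
    (fun _ _ => abs_le_one_of_irreducible hg.2.2.1) hmin
  have hdeg := two_mul_totalDegree_vecBinom _ (kernelVec_ne_zero Q hb) hg.2.1
  have := sum_abs_kernelVec_le Q hk habs
  omega

end Binomials

end TriangleStar

theorem exists_graph_Graver_degree_gap_general (K : Type*) [Field K] (N : ℕ) :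
    ∃ (V : Type) (_ : Fintype V) (G : SimpleGraph V), G.Connected ∧
      ∃ f, IsPrimitiveBinomial (graphToricIdeal K G) f ∧
        ∀ g, IsCircuitBinomial (graphToricIdeal K G) g →
          g.totalDegree + N ≤ f.totalDegree := by
  refine ⟨_, inferInstance, TriangleStar.graph N, TriangleStar.graph_connected N, _,
    TriangleStar.isPrimitiveBinomial_kernelVec_one, fun g hg => ?_⟩
  rw [TriangleStar.totalDegree_vecBinom_kernelVec_one]
  have := TriangleStar.totalDegree_le_of_isCircuitBinomial hg
  omega

/-- For every `N > 0` there is a finite simple connected graph `G` such that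
the Graver basis of `I_G` contains a binomial whose degree exceeds the degree of every circuit
of `I_G` by at least `N`. -/
theorem exists_graph_Graver_degree_gap (K : Type*) [Field K] (N : ℕ) (hN : 0 < N) :
    ∃ (V : Type) (_ : Fintype V) (G : SimpleGraph V), G.Connected ∧
      ∃ f, IsPrimitiveBinomial (graphToricIdeal K G) f ∧
        ∀ g, IsCircuitBinomial (graphToricIdeal K G) g →
          g.totalDegree + N ≤ f.totalDegree :=
  exists_graph_Graver_degree_gap_general K N

end
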